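/- arXiv:2509.14798 — 7 statements merged into one kernel-verified Lean document; each statement's English description precedes it below -/
import Mathlib

section
/- Fix a point-hyperplane antiflag (p, φ) of V(n,2). The number of antiflags (p', φ') such that exactly one of the two conditions φ'(p) = 0 and φ(p') = 0 holds (relation A₁) equals (2^{n−1} − 1)·2^{n−1}. -/
/-!
Count the antiflags `(q, ψ)` point by point. The conditions exclude `q = 0`, and also `q = p`,
where `ψ p = 1 = φ p`. For any other `q` the vectors `p, q` are linearly independent (over
GF(2) any two distinct nonzero vectors are), and the conditions on `ψ` say exactly `ψ q = 1`
and `ψ p = 1 + φ q`. Prescribing the values of a functional on `k` independent vectors cuts out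
a coset of a codimension-`k` subspace of the dual, so each of the `2^n - 2` admissible points
carries `2^(n-2)` functionals, and `(2^n - 2) 2^(n-2) = (2^(n-1) - 1) 2^(n-1)`.
-/

/-- A point-hyperplane antiflag of `V(n,2)`: a pair `(p, φ)` of a nonzero vector `p`
and a linear functional `φ` with `φ p = 1`. -/
def IsAntiflag (n : ℕ) (x : (Fin n → ZMod 2) × ((Fin n → ZMod 2) →ₗ[ZMod 2] ZMod 2)) : Prop :=
  x.1 ≠ 0 ∧ x.2 x.1 = 1

open Module

theorem LinearMap.natCard_fiber_eq_natCard_ker {R M N : Type*} [Ring R] [AddCommGroup M]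
    [AddCommGroup N] [Module R M] [Module R N] (f : M →ₗ[R] N) (x₀ : M) :
    Nat.card {x // f x = f x₀} = Nat.card (ker f) :=
  Nat.card_congr <| (Equiv.subRight x₀).subtypeEquiv fun x => by simp [sub_eq_zero]

section Dual

variable {K V ι : Type*} [Field K] [AddCommGroup V] [Module K V] [Fintype ι] {v : ι → V}

theorem LinearIndependent.exists_dual_apply_eq (hv : LinearIndependent K v) (a : ι → K) :
    ∃ ψ : Dual K V, ∀ i, ψ (v i) = a i := by
  classical
  obtain ⟨ψ, hψ⟩ := LinearMap.dualMap_surjective_of_injective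
    (linearIndependent_iff_injective_fintypeLinearCombination.mp hv)
    (Fintype.linearCombination K a)
  exact ⟨ψ, fun i => by simpa using LinearMap.congr_fun hψ (Pi.single i 1)⟩

theorem LinearIndependent.natCard_dual_apply_eq [FiniteDimensional K V]
    (hv : LinearIndependent K v) (a : ι → K) :
    Nat.card {ψ : Dual K V // ∀ i, ψ (v i) = a i} =
      Nat.card K ^ (finrank K V - Fintype.card ι) := by
  let L : Dual K V →ₗ[K] ι → K := LinearMap.pi fun i => Dual.eval K V (v i)
  obtain ⟨ψ₀, hψ₀⟩ := hv.exists_dual_apply_eq a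
  have hL : LinearMap.range L = ⊤ := LinearMap.range_eq_top.mpr fun b =>
    (hv.exists_dual_apply_eq b).imp fun _ hψ => funext hψ
  have hker : finrank K (LinearMap.ker L) = finrank K V - Fintype.card ι := by
    have := L.finrank_range_add_finrank_ker
    rw [hL, finrank_top, finrank_fintype_fun_eq_card, Subspace.dual_finrank_eq] at this
    omega
  calc Nat.card {ψ : Dual K V // ∀ i, ψ (v i) = a i}
      = Nat.card {ψ // L ψ = L ψ₀} :=
        Nat.card_congr <| Equiv.subtypeEquivRight fun ψ => by simp [L, funext_iff, hψ₀]
    _ = Nat.card K ^ (finrank K V - Fintype.card ι) := by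
        rw [L.natCard_fiber_eq_natCard_ker, natCard_eq_pow_finrank (K := K), hker]

end Dual

theorem linearIndependent_pair_zmod_two {V : Type*} [AddCommGroup V] [Module (ZMod 2) V]
    {x y : V} (hx : x ≠ 0) (hy : y ≠ 0) (hxy : x ≠ y) :
    LinearIndependent (ZMod 2) ![x, y] := by
  rw [LinearIndependent.pair_iff' hx]
  intro a
  fin_cases a
  · exact (zero_smul (ZMod 2) x).trans_ne hy.symm
  · exact (one_smul (ZMod 2) x).trans_ne hxy

theorem ZMod.xor_eq_zero_iff_eq_one_add (x y : ZMod 2) : Xor (x = 0) (y = 0) ↔ x = 1 + y := by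
  revert x y
  unfold Xor
  decide

theorem Nat.two_pow_sub_two_mul_two_pow_sub_two (n : ℕ) :
    (2 ^ n - 2) * 2 ^ (n - 2) = (2 ^ (n - 1) - 1) * 2 ^ (n - 1) := by
  rcases n with _ | _ | m
  · rfl
  · rfl
  · show (2 ^ (m + 2) - 2) * 2 ^ m = (2 ^ (m + 1) - 1) * 2 ^ (m + 1)
    rw [pow_succ 2 (m + 1), ← Nat.sub_one_mul, pow_succ 2 m]
    ring

section Antiflag

variable {n : ℕ} {p q : Fin n → ZMod 2} {φ : (Fin n → ZMod 2) →ₗ[ZMod 2] ZMod 2}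

theorem IsAntiflag.natCard_relationA1_fiber_eq_zero (h : IsAntiflag n (p, φ))
    (hq : q = 0 ∨ q = p) :
    Nat.card {ψ // IsAntiflag n (q, ψ) ∧ Xor (ψ p = 0) (φ q = 0)} = 0 := by
  rw [Nat.card_eq_zero]
  refine .inl ⟨fun ⟨ψ, ⟨hq0, hψq⟩, hxor⟩ => ?_⟩
  rcases hq with rfl | rfl
  · exact hq0 rfl
  · simp [Xor, hψq, h.2] at hxor

theorem IsAntiflag.natCard_relationA1_fiber_eq_two_pow (h : IsAntiflag n (p, φ)) (hq0 : q ≠ 0)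
    (hqp : q ≠ p) :
    Nat.card {ψ // IsAntiflag n (q, ψ) ∧ Xor (ψ p = 0) (φ q = 0)} = 2 ^ (n - 2) := by
  have hv : LinearIndependent (ZMod 2) ![p, q] :=
    linearIndependent_pair_zmod_two h.1 hq0 hqp.symm
  calc _ = Nat.card {ψ : Dual (ZMod 2) (Fin n → ZMod 2) //
          ∀ i, ψ (![p, q] i) = ![1 + φ q, 1] i} :=
        Nat.card_congr <| Equiv.subtypeEquivRight fun ψ => by
          simp [Fin.forall_fin_two, IsAntiflag, hq0, ZMod.xor_eq_zero_iff_eq_one_add, and_comm]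
    _ = 2 ^ (n - 2) := by
        rw [hv.natCard_dual_apply_eq]
        simp

end Antiflag

theorem card_relation_A1_general (n : ℕ)
    (p : Fin n → ZMod 2) (φ : (Fin n → ZMod 2) →ₗ[ZMod 2] ZMod 2)
    (h : IsAntiflag n (p, φ)) :
    Nat.card {x : (Fin n → ZMod 2) × ((Fin n → ZMod 2) →ₗ[ZMod 2] ZMod 2) //
      IsAntiflag n x ∧ Xor' (x.2 p = 0) (φ x.1 = 0)} = (2^(n-1) - 1) * 2^(n-1) := by
  classical
  have := Module.finite_of_finite (ZMod 2) (M := Dual (ZMod 2) (Fin n → ZMod 2))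
  refine (Nat.card_congr (Equiv.subtypeProdEquivSigmaSubtype fun q ψ =>
      IsAntiflag n (q, ψ) ∧ Xor (ψ p = 0) (φ q = 0))).trans ?_
  rw [Nat.card_sigma,
    ← Finset.sum_subset (Finset.subset_univ {0, p}ᶜ) fun q _ hq =>
      h.natCard_relationA1_fiber_eq_zero (by simpa [or_iff_not_imp_left] using hq),
    Finset.sum_congr rfl fun q hq =>
      h.natCard_relationA1_fiber_eq_two_pow (by simp_all) (by simp_all),
    Finset.sum_const, Finset.card_compl, Finset.card_pair h.1.symm, smul_eq_mul]
  simpa using Nat.two_pow_sub_two_mul_two_pow_sub_two n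

/-- Relation `A₁`: fixing an antiflag `(p, φ)`, the number of antiflags `(p', φ')` such that
exactly one of `φ' p = 0` and `φ p' = 0` holds is `(2^(n-1) - 1) * 2^(n-1)`. -/
theorem card_relation_A1 (n : ℕ) (hn : 2 ≤ n)
    (p : Fin n → ZMod 2) (φ : (Fin n → ZMod 2) →ₗ[ZMod 2] ZMod 2)
    (h : IsAntiflag n (p, φ)) :
    Nat.card {x : (Fin n → ZMod 2) × ((Fin n → ZMod 2) →ₗ[ZMod 2] ZMod 2) //
      IsAntiflag n x ∧ Xor' (x.2 p = 0) (φ x.1 = 0)} = (2^(n-1) - 1) * 2^(n-1) :=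
  card_relation_A1_general n p φ h
end

section
/- Fix a point-hyperplane antiflag (p, φ) of V(n,2). The number of antiflags (p', φ') with φ'(p) = 0 and φ(p') = 0 (relation A₂) equals (2^{n−1} − 1)·2^{n−2}. -/
lemma dual_finrank (n : ℕ) :
    Module.finrank (ZMod 2) ((Fin n → ZMod 2) →ₗ[ZMod 2] ZMod 2) = n := by
  rw [(LinearEquiv.piRing (ZMod 2) (ZMod 2) (Fin n) (ZMod 2)).finrank_eq]
  simp

noncomputable instance (n : ℕ) : Fintype ((Fin n → ZMod 2) →ₗ[ZMod 2] ZMod 2) :=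
  Fintype.ofEquiv _ (LinearEquiv.piRing (ZMod 2) (ZMod 2) (Fin n) (ZMod 2)).toEquiv.symm

lemma fiber_card (n : ℕ) (hn : 2 ≤ n) (p p' : Fin n → ZMod 2)
    (φ : (Fin n → ZMod 2) →ₗ[ZMod 2] ZMod 2) (hφp : φ p = 1) (hp' : φ p' = 0)
    (hp'0 : p' ≠ 0) :
    Nat.card {ψ : (Fin n → ZMod 2) →ₗ[ZMod 2] ZMod 2 // ψ p' = 1 ∧ ψ p = 0}
      = 2 ^ (n - 2) := by
  obtain ⟨i, hi⟩ := Function.ne_iff.mp hp'0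
  have hi0 : p' i ≠ 0 := by simpa using hi
  have hi1 : p' i = 1 := by
    revert hi0; generalize p' i = a; revert a; decide
  set π : (Fin n → ZMod 2) →ₗ[ZMod 2] ZMod 2 := LinearMap.proj i with hπ
  set ψ₀ : (Fin n → ZMod 2) →ₗ[ZMod 2] ZMod 2 := π - (π p) • φ with hψ₀
  have hψ₀p' : ψ₀ p' = 1 := by
    simp [hψ₀, hπ, hp', hi1]
  have hψ₀p : ψ₀ p = 0 := by
    simp [hψ₀, hφp]
  set ev : ((Fin n → ZMod 2) →ₗ[ZMod 2] ZMod 2) →ₗ[ZMod 2] ZMod 2 × ZMod 2 :=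
    (LinearMap.applyₗ p').prod (LinearMap.applyₗ p) with hev
  have hevval : ∀ ψ, ev ψ = (ψ p', ψ p) := fun ψ => rfl
  have hsurj : Function.Surjective ev := by
    rintro ⟨a, b⟩
    refine ⟨a • ψ₀ + b • φ, ?_⟩
    simp [hevval, hψ₀p', hψ₀p, hp', hφp]
  have e1 : {ψ : (Fin n → ZMod 2) →ₗ[ZMod 2] ZMod 2 // ψ p' = 1 ∧ ψ p = 0}
      ≃ LinearMap.ker ev :=
    { toFun := fun ψ => ⟨ψ.1 - ψ₀, by
        have h1 := ψ.2.1; have h2 := ψ.2.2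
        simp [LinearMap.mem_ker, hevval, h1, h2, hψ₀p', hψ₀p, Prod.ext_iff]⟩
      invFun := fun g => ⟨g.1 + ψ₀, by
        have := g.2
        simp only [LinearMap.mem_ker, hevval, Prod.ext_iff] at this
        simp [this.1, this.2, hψ₀p', hψ₀p]⟩
      left_inv := fun ψ => by ext : 1; simp
      right_inv := fun g => by ext : 1; simp }
  rw [Nat.card_congr e1]
  haveI : Fintype (LinearMap.ker ev) := Fintype.ofFinite _
  have hrank : Module.finrank (ZMod 2) (LinearMap.ker ev) = n - 2 := by
    have h1 := LinearMap.finrank_range_add_finrank_ker ev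
    rw [LinearMap.range_eq_top.mpr hsurj, finrank_top, dual_finrank] at h1
    have h2 : Module.finrank (ZMod 2) (ZMod 2 × ZMod 2) = 2 := by
      simp [Module.finrank_prod]
    omega
  rw [Nat.card_eq_fintype_card, Module.card_eq_pow_finrank (K := ZMod 2), hrank, ZMod.card]

/-- Relation `A₂`: fixing an antiflag `(p, φ)`, the number of antiflags `(p', φ')` with
`φ' p = 0` and `φ p' = 0` is `(2^(n-1) - 1) * 2^(n-2)`. -/
theorem card_relation_A2 (n : ℕ) (hn : 2 ≤ n)
    (p : Fin n → ZMod 2) (φ : (Fin n → ZMod 2) →ₗ[ZMod 2] ZMod 2)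
    (h : IsAntiflag n (p, φ)) :
    Nat.card {x : (Fin n → ZMod 2) × ((Fin n → ZMod 2) →ₗ[ZMod 2] ZMod 2) //
      IsAntiflag n x ∧ x.2 p = 0 ∧ φ x.1 = 0} = (2^(n-1) - 1) * 2^(n-2) := by
  obtain ⟨hp, hφp⟩ := h
  have e : {x : (Fin n → ZMod 2) × ((Fin n → ZMod 2) →ₗ[ZMod 2] ZMod 2) //
      IsAntiflag n x ∧ x.2 p = 0 ∧ φ x.1 = 0} ≃
      Σ q : {q : Fin n → ZMod 2 // φ q = 0 ∧ q ≠ 0},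
        {ψ : (Fin n → ZMod 2) →ₗ[ZMod 2] ZMod 2 // ψ q.1 = 1 ∧ ψ p = 0} :=
    { toFun := fun x => ⟨⟨x.1.1, x.2.2.2, x.2.1.1⟩, ⟨x.1.2, x.2.1.2, x.2.2.1⟩⟩
      invFun := fun s => ⟨(s.1.1, s.2.1), ⟨s.1.2.2, s.2.2.1⟩, s.2.2.2, s.1.2.1⟩
      left_inv := fun _ => rfl
      right_inv := fun _ => rfl }
  rw [Nat.card_congr e]
  classical
  rw [Nat.card_eq_fintype_card, Fintype.card_sigma]
  have hfib : ∀ q : {q : Fin n → ZMod 2 // φ q = 0 ∧ q ≠ 0},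
      Fintype.card {ψ : (Fin n → ZMod 2) →ₗ[ZMod 2] ZMod 2 // ψ q.1 = 1 ∧ ψ p = 0}
        = 2 ^ (n - 2) := fun q => by
    rw [← Nat.card_eq_fintype_card]
    exact fiber_card n hn p q.1 φ hφp q.2.1 q.2.2
  rw [Finset.sum_congr rfl (fun q _ => hfib q), Finset.sum_const, smul_eq_mul]
  rw [Finset.card_univ]
  -- base count
  have hker : Fintype.card (LinearMap.ker φ) = 2 ^ (n - 1) := by
    have hsurj : Function.Surjective φ := fun a => ⟨a • p, by simp [hφp]⟩
    have h1 := LinearMap.finrank_range_add_finrank_ker φ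
    rw [LinearMap.range_eq_top.mpr hsurj, finrank_top, Module.finrank_pi, Fintype.card_fin] at h1
    have h2 : Module.finrank (ZMod 2) (ZMod 2) = 1 := Module.finrank_self _
    rw [Module.card_eq_pow_finrank (K := ZMod 2), ZMod.card]
    congr 1
    rw [Module.finrank_self] at h1
    omega
  have e2 : {q : Fin n → ZMod 2 // φ q = 0 ∧ q ≠ 0} ≃
      {y : LinearMap.ker φ // ¬ (y = 0)} :=
    { toFun := fun q => ⟨⟨q.1, q.2.1⟩, fun hy => q.2.2 (by simpa using congrArg Subtype.val hy)⟩
      invFun := fun y => ⟨y.1.1, y.1.2, fun hy => y.2 (Subtype.ext hy)⟩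
      left_inv := fun _ => rfl
      right_inv := fun _ => rfl }
  rw [Fintype.card_congr e2, Fintype.card_subtype_compl, hker]
  simp [Fintype.card_subtype_eq]
end

section
/- Fix a nonsingular vector x of V(2n,2) (i.e. Q(x) = 1). The number of nonsingular vectors x' ≠ x such that x + x' is also nonsingular, i.e. Q(x + x') = 1 (relation B₁), equals (2^{n−1} − 1)·2^{n−1}. -/
open Finset

/-- The hyperbolic quadratic form on `V(2n,2)`:
`Q x = ∑_{i=0}^{n-1} x (2i) * x (2i+1)`. -/
def Q (n : ℕ) (x : Fin (2*n) → ZMod 2) : ZMod 2 :=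
  ∑ i : Fin n, x ⟨2*i.1, by have := i.2; omega⟩ * x ⟨2*i.1+1, by have := i.2; omega⟩


namespace B1aux

/-- sign character on `ZMod 2`. -/
def χ (a : ZMod 2) : ℤ := if a = 0 then 1 else -1

lemma χ_add (a b : ZMod 2) : χ (a + b) = χ a * χ b := by
  revert a b; decide

lemma χ_zero : χ 0 = 1 := rfl
lemma χ_one : χ 1 = -1 := rfl

lemma χ_sum {ι : Type*} (s : Finset ι) (f : ι → ZMod 2) :
    χ (∑ i ∈ s, f i) = ∏ i ∈ s, χ (f i) := by
  induction s using Finset.cons_induction with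
  | empty => simp [χ]
  | cons a s ha ih => rw [Finset.sum_cons, Finset.prod_cons, χ_add, ih]

variable {n : ℕ}

/-- quadratic form on the reindexed space. -/
def Q' (w : Fin n → Fin 2 → ZMod 2) : ZMod 2 := ∑ i, w i 0 * w i 1

/-- associated bilinear form. -/
def Bl (v w : Fin n → Fin 2 → ZMod 2) : ZMod 2 :=
  ∑ i, (v i 0 * w i 1 + v i 1 * w i 0)

lemma Q'_add (v w : Fin n → Fin 2 → ZMod 2) :
    Q' (v + w) = Q' v + Q' w + Bl v w := by
  unfold Q' Bl
  rw [← Finset.sum_add_distrib, ← Finset.sum_add_distrib]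
  apply Finset.sum_congr rfl
  intro i _
  show (v i 0 + w i 0) * (v i 1 + w i 1) = _
  ring

lemma Bl_self (v : Fin n → Fin 2 → ZMod 2) : Bl v v = 0 := by
  unfold Bl
  have h : ∀ a b : ZMod 2, a * b + b * a = 0 := by decide
  simp [h]

lemma S1 : ∑ w : Fin n → Fin 2 → ZMod 2, χ (Q' w) = 2 ^ n := by
  have h1 : ∀ w : Fin n → Fin 2 → ZMod 2, χ (Q' w) = ∏ i, χ (w i 0 * w i 1) := fun w =>
    χ_sum _ _
  simp only [h1]
  have h3 := (Finset.prod_univ_sum (fun _ : Fin n => (univ : Finset (Fin 2 → ZMod 2)))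
    (fun _ a => χ (a 0 * a 1))).symm
  rw [Fintype.piFinset_univ] at h3
  rw [h3]
  have h2 : ∑ p : Fin 2 → ZMod 2, χ (p 0 * p 1) = 2 := by decide
  simp [h2]

lemma S2 (v : Fin n → Fin 2 → ZMod 2) (hv : Q' v = 1) :
    ∑ w : Fin n → Fin 2 → ZMod 2, χ (Q' w + Bl v w) = -(2 ^ n) := by
  have key : ∀ w, χ (Q' w + Bl v w) = -χ (Q' (v + w)) := by
    intro w
    have h : Q' (v + w) = Q' w + Bl v w + 1 := by rw [Q'_add, hv]; ring
    calc χ (Q' w + Bl v w) = -(χ (Q' w + Bl v w) * χ 1) := by rw [χ_one]; ring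
      _ = -χ (Q' w + Bl v w + 1) := by rw [χ_add (Q' w + Bl v w) 1]
      _ = -χ (Q' (v + w)) := by rw [h]
  simp only [key]
  have : ∑ w : Fin n → Fin 2 → ZMod 2, χ (Q' (v + w))
      = ∑ w : Fin n → Fin 2 → ZMod 2, χ (Q' w) :=
    Fintype.sum_equiv (Equiv.addLeft v) _ _ (fun w => rfl)
  rw [Finset.sum_neg_distrib, this, S1]

lemma S3 (v : Fin n → Fin 2 → ZMod 2) (hv : v ≠ 0) :
    ∑ w : Fin n → Fin 2 → ZMod 2, χ (Bl v w) = 0 := by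
  -- find coordinate where v is nonzero
  obtain ⟨i, j, hij⟩ : ∃ i j, v i j ≠ 0 := by
    by_contra h
    push_neg at h
    exact hv (funext fun i => funext fun j => h i j)
  have hij1 : v i j = 1 := by
    revert hij; generalize v i j = a; revert a; decide
  -- w₀ : indicator at (i, other j)
  set k : Fin 2 := if j = 0 then 1 else 0 with hk
  set w₀ : Fin n → Fin 2 → ZMod 2 := fun a b => if a = i ∧ b = k then 1 else 0 with hw₀
  have hB : Bl v w₀ = 1 := by
    unfold Bl
    rw [Finset.sum_eq_single i]
    · fin_cases j <;> simp [hw₀, hk] <;> simpa using hij1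
    · intro b _ hb
      simp [hw₀, hb]
    · intro h; exact absurd (Finset.mem_univ i) h
  have hBadd : ∀ w w', Bl v (w + w') = Bl v w + Bl v w' := by
    intro w w'
    unfold Bl
    rw [← Finset.sum_add_distrib]
    apply Finset.sum_congr rfl
    intro a _
    show v a 0 * (w a 1 + w' a 1) + v a 1 * (w a 0 + w' a 0) = _
    ring
  have hflip : ∑ w : Fin n → Fin 2 → ZMod 2, χ (Bl v w)
      = ∑ w : Fin n → Fin 2 → ZMod 2, χ (Bl v (w + w₀)) :=
    Fintype.sum_equiv (Equiv.addRight w₀).symm _ _ (by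
      intro w
      simp)
  have : ∀ w, χ (Bl v (w + w₀)) = -χ (Bl v w) := by
    intro w
    rw [hBadd, hB, χ_add, χ_one]; ring
  simp only [this] at hflip
  rw [Finset.sum_neg_distrib] at hflip
  linarith

end B1aux

namespace B1aux

lemma count_main (n : ℕ) (hn : 1 ≤ n) (v : Fin n → Fin 2 → ZMod 2) (hv : Q' v = 1) :
    (Finset.univ.filter (fun w : Fin n → Fin 2 → ZMod 2 => Q' w = 1 ∧ Bl v w = 1)).card
      = (2 ^ (n - 1) - 1) * 2 ^ (n - 1) := by
  have hv0 : v ≠ 0 := by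
    intro h
    rw [h] at hv
    simp [Q'] at hv
  have hpt : ∀ a b : ZMod 2,
      (1 - χ a) * (1 - χ b) = if a = 1 ∧ b = 1 then 4 else 0 := by decide
  have hsum : ∑ w : Fin n → Fin 2 → ZMod 2, (1 - χ (Q' w)) * (1 - χ (Bl v w))
      = 4 * ((Finset.univ.filter
          (fun w : Fin n → Fin 2 → ZMod 2 => Q' w = 1 ∧ Bl v w = 1)).card : ℤ) := by
    simp only [hpt]
    rw [Finset.sum_ite, Finset.sum_const, Finset.sum_const]
    simp [mul_comm]
  have hexp : ∑ w : Fin n → Fin 2 → ZMod 2, (1 - χ (Q' w)) * (1 - χ (Bl v w))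
      = (Fintype.card (Fin n → Fin 2 → ZMod 2) : ℤ)
        - (∑ w : Fin n → Fin 2 → ZMod 2, χ (Q' w))
        - (∑ w : Fin n → Fin 2 → ZMod 2, χ (Bl v w))
        + ∑ w : Fin n → Fin 2 → ZMod 2, χ (Q' w + Bl v w) := by
    have : ∀ w : Fin n → Fin 2 → ZMod 2,
        (1 - χ (Q' w)) * (1 - χ (Bl v w))
          = 1 - χ (Q' w) - χ (Bl v w) + χ (Q' w + Bl v w) := by
      intro w; rw [χ_add]; ring
    simp only [this]
    rw [Finset.sum_add_distrib, Finset.sum_sub_distrib, Finset.sum_sub_distrib]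
    simp [Finset.card_univ]
  rw [S1, S2 v hv, S3 v hv0] at hexp
  rw [hexp] at hsum
  have hcard : (Fintype.card (Fin n → Fin 2 → ZMod 2) : ℤ) = 4 ^ n := by
    simp only [Fintype.card_fun, Fintype.card_fin, ZMod.card]
    push_cast
    ring
  rw [hcard] at hsum
  -- now: 4^n - 2^n - 0 + -(2^n) = 4 * card
  have hn' : n - 1 + 1 = n := by omega
  set a : ℤ := 2 ^ (n - 1) with ha
  have h2n : (2 : ℤ) ^ n = 2 * a := by rw [ha, ← pow_succ']; rw [hn']
  have h4n : (4 : ℤ) ^ n = 4 * a ^ 2 := by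
    have : (4 : ℤ) ^ n = ((2:ℤ) ^ n) ^ 2 := by
      rw [← pow_mul, mul_comm, pow_mul]; norm_num
    rw [this, h2n]; ring
  have ha1 : 1 ≤ a := by
    have := pow_pos (by norm_num : (0:ℤ) < 2) (n-1)
    omega
  have hfin : ((Finset.univ.filter
      (fun w : Fin n → Fin 2 → ZMod 2 => Q' w = 1 ∧ Bl v w = 1)).card : ℤ)
      = (a - 1) * a := by
    rw [h2n, h4n] at hsum
    nlinarith [hsum]
  have hnat : (((2 ^ (n - 1) - 1) * 2 ^ (n - 1) : ℕ) : ℤ) = (a - 1) * a := by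
    push_cast [Nat.cast_sub (Nat.one_le_two_pow)]
    ring
  omega

end B1aux

namespace B1aux

lemma eval_congr {m : ℕ} (x : Fin m → ZMod 2) {a b : Fin m} (h : a.1 = b.1) :
    x a = x b := by
  rw [show a = b from Fin.ext h]

lemma eval_congr2 {m : ℕ} (w : Fin m → Fin 2 → ZMod 2) {a b : Fin m} {c d : Fin 2}
    (h : a.1 = b.1) (h' : c.1 = d.1) : w a c = w b d := by
  rw [show a = b from Fin.ext h, show c = d from Fin.ext h']

def E (n : ℕ) : (Fin (2*n) → ZMod 2) ≃ (Fin n → Fin 2 → ZMod 2) where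
  toFun x i j := x ⟨2*i.1 + j.1, by have := i.2; have := j.2; omega⟩
  invFun w k := w ⟨k.1 / 2, by have := k.2; omega⟩ ⟨k.1 % 2, by omega⟩
  left_inv x := by
    funext k
    exact eval_congr x (by simp only [Fin.val_mk]; omega)
  right_inv w := by
    funext i j
    have hi := i.2
    have hj := j.2
    exact eval_congr2 w (by simp only [Fin.val_mk]; omega) (by simp only [Fin.val_mk]; omega)

lemma E_add (n : ℕ) (x y : Fin (2*n) → ZMod 2) : E n (x + y) = E n x + E n y := rfl

lemma Q_eq (n : ℕ) (x : Fin (2*n) → ZMod 2) : Q n x = Q' (E n x) := by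
  unfold Q Q' E
  apply Finset.sum_congr rfl
  intro i _
  simp only [Equiv.coe_fn_mk]
  exact congrArg₂ (· * ·) (eval_congr x (by simp)) (eval_congr x (by simp))

end B1aux

open B1aux in
/-- Relation `B₁`: fixing a nonsingular vector `x`, the number of nonsingular vectors
`x' ≠ x` with `x + x'` nonsingular is `(2^(n-1) - 1) * 2^(n-1)`. -/
theorem card_relation_B1 (n : ℕ) (hn : 2 ≤ n) (x : Fin (2*n) → ZMod 2) (hx : Q n x = 1) :
    Nat.card {x' : Fin (2*n) → ZMod 2 //
      Q n x' = 1 ∧ x' ≠ x ∧ Q n (x + x') = 1} = (2^(n-1) - 1) * 2^(n-1) := by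
  set v := E n x with hvdef
  have hv : Q' v = 1 := by rw [← Q_eq]; exact hx
  have h11 : (1 : ZMod 2) + 1 = 0 := by decide
  have key : ∀ x' : Fin (2*n) → ZMod 2,
      (Q n x' = 1 ∧ x' ≠ x ∧ Q n (x + x') = 1) ↔
      (Q' (E n x') = 1 ∧ Bl v (E n x') = 1) := by
    intro x'
    set w := E n x' with hwdef
    have hq : Q n x' = Q' w := Q_eq n x'
    have hq2 : Q n (x + x') = Q' v + Q' w + Bl v w := by
      rw [Q_eq, E_add, Q'_add]
    constructor
    · rintro ⟨h1, h2, h3⟩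
      rw [hq] at h1
      refine ⟨h1, ?_⟩
      rw [hq2, hv, h1, h11] at h3
      rw [← h3]; ring
    · rintro ⟨h1, hB⟩
      refine ⟨by rw [hq]; exact h1, ?_, ?_⟩
      · intro h
        rw [h] at hwdef
        rw [hwdef, ← hvdef, Bl_self] at hB
        exact absurd hB (by decide)
      · rw [hq2, hv, h1, h11, zero_add]; exact hB
  rw [Nat.card_congr ((E n).subtypeEquiv (q := fun w => Q' w = 1 ∧ Bl v w = 1) key)]
  rw [Nat.card_eq_fintype_card, Fintype.card_subtype]
  exact count_main n (by omega) v hv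
end

section
/- Fix a nonsingular vector x of V(2n,2) (i.e. Q(x) = 1). The number of nonsingular vectors x' ≠ x such that x + x' is singular, i.e. Q(x + x') = 0 (relation B₂), equals (2^{n−1} + 1)·(2^{n−1} − 1). -/
/-!
Since `Q (x + x') = Q x + Q x' + B x x'` for the polar form `B` of `Q`, the vectors in relation
`B₂` with `x` are the nonsingular vectors of `x^⊥` other than `x`. Translation by a vector `w`
with `B x w = 1` (the even-coordinate part of `x` will do) exchanges `x^⊥` and its complement,
and inside `x^⊥` translation by `x` exchanges singular and nonsingular vectors; so `x^⊥` holds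
`2^(2n) / 4 = 2^(2n-2)` nonsingular vectors.
-/

open Finset QuadraticMap

section

variable {V : Type*} [AddCommGroup V] [Module (ZMod 2) V]

theorem add_self_eq_zero_of_zmod_two (v : V) : v + v = 0 := by
  rw [← two_smul (ZMod 2) v, show (2 : ZMod 2) = 0 from rfl, zero_smul]

theorem two_mul_card_filter_eq_of_translate {s : Finset V} {p : V → ZMod 2} {w : V}
    (hs : ∀ v ∈ s, v + w ∈ s) (hp : ∀ v ∈ s, p (v + w) = p v + 1) (a : ZMod 2) :
    2 * #{v ∈ s | p v = a} = #s := by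
  have hback (v : V) : v + w + w = v := by
    rw [add_assoc, add_self_eq_zero_of_zmod_two, add_zero]
  have hswap : #{v ∈ s | p v = 0} = #{v ∈ s | p v = 1} := by
    refine card_nbij' (· + w) (· + w) ?_ ?_ (fun v _ ↦ hback v) (fun v _ ↦ hback v) <;>
    · intro v hv
      simp only [coe_filter, Set.mem_ofPred_eq] at hv ⊢
      exact ⟨hs v hv.1, by rw [hp v hv.1, hv.2]; decide⟩
  have hsplit := card_filter_add_card_filter_not (s := s) (fun v ↦ p v = 1)
  rw [filter_congr fun v _ ↦ (by decide : ∀ b : ZMod 2, ¬b = 1 ↔ b = 0) (p v)] at hsplit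
  fin_cases a <;> simp only [Fin.zero_eta, Fin.mk_one] <;> omega

variable (q : QuadraticForm (ZMod 2) V)

theorem polar_self_eq_zero_of_zmod_two (x : V) : polar q x x = 0 := by
  rw [polar_self, two_nsmul, CharTwo.add_self_eq_zero]

theorem four_mul_card_relation_B2_add_one [Fintype V] {x w : V} (hx : q x = 1)
    (hw : polar q x w = 1) :
    4 * (Nat.card {x' : V // q x' = 1 ∧ x' ≠ x ∧ q (x + x') = 0} + 1) = Fintype.card V := by
  classical
  set K : Finset V := {v | polar q x v = 0}
  set S : Finset V := {v ∈ K | q v = 1}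
  have hK : 2 * #K = Fintype.card V :=
    two_mul_card_filter_eq_of_translate (w := w) (fun v _ ↦ mem_univ _)
      (fun v _ ↦ by rw [polar_add_right, hw]) 0
  have hS : 2 * #S = #K := by
    refine two_mul_card_filter_eq_of_translate (w := x) (fun v hv ↦ ?_) (fun v hv ↦ ?_) 1 <;>
      simp only [K, mem_filter, mem_univ, true_and] at hv ⊢
    · rw [polar_add_right, hv, polar_self_eq_zero_of_zmod_two, add_zero]
    · rw [QuadraticMap.map_add q v x, hx, polar_comm, hv, add_zero]
  have hxS : x ∈ S := by
    simp only [S, K, mem_filter, mem_univ, hx, polar_self_eq_zero_of_zmod_two, and_self]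
  have hrel : ({x' | q x' = 1 ∧ x' ≠ x ∧ q (x + x') = 0} : Finset V) = S.erase x := by
    ext v
    simp only [S, K, mem_filter, mem_erase, mem_univ, true_and]
    have hsum (hv : q v = 1) : q (x + v) = polar q x v := by
      rw [QuadraticMap.map_add q, hx, hv, CharTwo.add_self_eq_zero, zero_add]
    constructor
    · rintro ⟨hv, hne, h⟩
      exact ⟨hne, hsum hv ▸ h, hv⟩
    · rintro ⟨hne, h, hv⟩
      exact ⟨hv, hne, (hsum hv).trans h⟩
  rw [Nat.card_eq_fintype_card, Fintype.card_subtype, hrel, card_erase_of_mem hxS,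
    Nat.sub_add_cancel (card_pos.mpr ⟨x, hxS⟩), ← hK, ← hS]
  ring

end

section

variable {n : ℕ}

def hyperbolicForm (n : ℕ) : QuadraticForm (ZMod 2) (Fin (2 * n) → ZMod 2) :=
  ∑ i : Fin n,
    linMulLin (LinearMap.proj ⟨2 * i.1, by omega⟩) (LinearMap.proj ⟨2 * i.1 + 1, by omega⟩)

theorem coe_hyperbolicForm (n : ℕ) : ⇑(hyperbolicForm n) = Q n := by
  funext x
  simp [hyperbolicForm, Q]

def evenPart (x : Fin (2 * n) → ZMod 2) : Fin (2 * n) → ZMod 2 :=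
  fun j ↦ if j.1 % 2 = 0 then x j else 0

theorem polar_Q_evenPart (x : Fin (2 * n) → ZMod 2) : polar (Q n) x (evenPart x) = Q n x := by
  simp only [polar, Q, ← sum_sub_distrib]
  refine sum_congr rfl fun i _ ↦ ?_
  simp only [evenPart, Pi.add_apply, if_pos (by omega : 2 * i.1 % 2 = 0),
    if_neg (by omega : (2 * i.1 + 1) % 2 ≠ 0)]
  ring

end

theorem eq_of_four_mul_add_one_eq_two_pow {c n : ℕ} (h : 4 * (c + 1) = 2 ^ (2 * n)) :
    c = (2 ^ (n - 1) + 1) * (2 ^ (n - 1) - 1) := by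
  cases n with
  | zero => omega
  | succ m =>
    rw [Nat.add_sub_cancel, ← Nat.sq_sub_sq, one_pow]
    rw [show 2 * (m + 1) = 2 + 2 * m by ring, pow_add, pow_mul'] at h
    omega

theorem card_relation_B2_general (n : ℕ) (x : Fin (2*n) → ZMod 2) (hx : Q n x = 1) :
    Nat.card {x' : Fin (2*n) → ZMod 2 //
      Q n x' = 1 ∧ x' ≠ x ∧ Q n (x + x') = 0} = (2^(n-1) + 1) * (2^(n-1) - 1) := by
  have hw : polar (Q n) x (evenPart x) = 1 := (polar_Q_evenPart x).trans hx
  rw [← coe_hyperbolicForm] at hx hw ⊢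
  apply eq_of_four_mul_add_one_eq_two_pow
  rw [four_mul_card_relation_B2_add_one _ hx hw]
  simp

/-- Relation `B₂`: fixing a nonsingular vector `x`, the number of nonsingular vectors
`x' ≠ x` with `x + x'` singular is `(2^(n-1) + 1) * (2^(n-1) - 1)`. -/
theorem card_relation_B2 (n : ℕ) (hn : 2 ≤ n) (x : Fin (2*n) → ZMod 2) (hx : Q n x = 1) :
    Nat.card {x' : Fin (2*n) → ZMod 2 //
      Q n x' = 1 ∧ x' ≠ x ∧ Q n (x + x') = 0} = (2^(n-1) + 1) * (2^(n-1) - 1) :=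
  card_relation_B2_general n x hx
end

section
/- (Lemma 1.) Let x be a nonsingular vector of V(2n,2), let X = span{x}, G = X^⊥ ⊓ Π, H = X^⊥ ⊓ Σ, and P = G^⊥ ⊓ Σ. Then P is not contained in H, i.e. the pair (P, H) is a point-hyperplane antiflag of Σ ≅ V(n,2). -/
/-- The bilinear form associated with `Q`: `B u v = Q (u+v) + Q u + Q v`. -/
def B (n : ℕ) (u v : Fin (2*n) → ZMod 2) : ZMod 2 :=
  Q n (u + v) + Q n u + Q n v

lemma B_eq (n : ℕ) (u v : Fin (2*n) → ZMod 2) :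
    B n u v = ∑ i : Fin n,
      (u ⟨2*i.1, by have := i.2; omega⟩ * v ⟨2*i.1+1, by have := i.2; omega⟩
        + u ⟨2*i.1+1, by have := i.2; omega⟩ * v ⟨2*i.1, by have := i.2; omega⟩) := by
  have key : ∀ a b c d : ZMod 2, (a+c)*(b+d) + a*b + c*d = a*d + c*b := by decide
  simp only [B, Q, Pi.add_apply, ← Finset.sum_add_distrib]
  exact Finset.sum_congr rfl fun i _ => by rw [key]; ring

lemma B_add_left (n : ℕ) (u v w : Fin (2*n) → ZMod 2) :
    B n (u + v) w = B n u w + B n v w := by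
  simp only [B_eq, Pi.add_apply, ← Finset.sum_add_distrib]
  exact Finset.sum_congr rfl fun i _ => by ring

lemma B_smul_left (n : ℕ) (c : ZMod 2) (v w : Fin (2*n) → ZMod 2) :
    B n (c • v) w = c * B n v w := by
  simp only [B_eq, Pi.smul_apply, smul_eq_mul, Finset.mul_sum]
  exact Finset.sum_congr rfl fun i _ => by ring

/-- The perp `S^⊥ = {v : B v s = 0 for all s ∈ S}` of a subspace `S`
with respect to the bilinear form `B`. -/
def perp (n : ℕ) (S : Submodule (ZMod 2) (Fin (2*n) → ZMod 2)) :
    Submodule (ZMod 2) (Fin (2*n) → ZMod 2) where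
  carrier := {v | ∀ s ∈ S, B n v s = 0}
  zero_mem' := by intro s _; simp [B_eq]
  add_mem' := by
    intro a b ha hb s hs
    rw [B_add_left, ha s hs, hb s hs, add_zero]
  smul_mem' := by
    intro c v hv s hs
    rw [B_smul_left, hv s hs, mul_zero]

/-- `Π`, the span of the even-indexed standard basis vectors `e_{2i}`,
a maximal totally singular subspace. -/
def PiSub (n : ℕ) : Submodule (ZMod 2) (Fin (2*n) → ZMod 2) :=
  Submodule.span (ZMod 2) {v | ∃ j : Fin (2*n), j.1 % 2 = 0 ∧ v = Pi.single j 1}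

/-- `Σ`, the span of the odd-indexed standard basis vectors `e_{2i+1}`,
a maximal totally singular subspace disjoint from `Π`. -/
def SigmaSub (n : ℕ) : Submodule (ZMod 2) (Fin (2*n) → ZMod 2) :=
  Submodule.span (ZMod 2) {v | ∃ j : Fin (2*n), j.1 % 2 = 1 ∧ v = Pi.single j 1}

/-- Lemma 1: for a nonsingular vector `x`, with `X = span{x}`, `G = X^⊥ ⊓ Π`,
`H = X^⊥ ⊓ Σ` and `P = G^⊥ ⊓ Σ`, the point `P` is not contained in the
hyperplane `H`, i.e. `(P, H)` is an antiflag of `Σ ≅ V(n,2)`. -/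
theorem antiflag_lemma (n : ℕ) (hn : 2 ≤ n) (x : Fin (2*n) → ZMod 2) (hx : Q n x = 1) :
    ¬ (perp n (perp n (Submodule.span (ZMod 2) {x}) ⊓ PiSub n) ⊓ SigmaSub n ≤
        perp n (Submodule.span (ZMod 2) {x}) ⊓ SigmaSub n) := by
  intro hle
  set w : Fin (2*n) → ZMod 2 := fun j => if j.1 % 2 = 1 then x j else 0 with hw
  have hwS : w ∈ SigmaSub n := by
    have hrep : w = ∑ j ∈ Finset.univ.filter (fun j : Fin (2*n) => j.1 % 2 = 1),
        x j • Pi.single j (1 : ZMod 2) := by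
      funext k
      rw [Finset.sum_apply]
      by_cases hk : k.1 % 2 = 1
      · rw [Finset.sum_eq_single k]
        · simp [hw, hk, Pi.single_eq_same]
        · intro b _ hb
          simp [Pi.single_eq_of_ne (Ne.symm hb)]
        · intro h
          exact absurd (Finset.mem_filter.mpr ⟨Finset.mem_univ k, hk⟩) h
      · rw [Finset.sum_eq_zero]
        · simp [hw, hk]
        · intro b hb
          have hb1 := (Finset.mem_filter.mp hb).2
          have : b ≠ k := by intro h; rw [h] at hb1; exact hk hb1
          simp [Pi.single_eq_of_ne (Ne.symm this)]
    rw [hrep]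
    exact Submodule.sum_mem _ fun j hj => Submodule.smul_mem _ _
      (Submodule.subset_span ⟨j, (Finset.mem_filter.mp hj).2, rfl⟩)
  have hPi0 : ∀ v ∈ PiSub n, ∀ j : Fin (2*n), j.1 % 2 = 1 → v j = 0 := by
    intro v hv
    refine Submodule.span_induction ?_ ?_ ?_ ?_ hv
    · rintro v ⟨j', hj', rfl⟩ j hj
      have : j' ≠ j := by intro h; rw [h] at hj'; omega
      exact Pi.single_eq_of_ne (Ne.symm this) 1
    · intro j _; rfl
    · intro a b _ _ ha hb j hj
      simp [Pi.add_apply, ha j hj, hb j hj]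
    · intro c a _ ha j hj
      simp [Pi.smul_apply, ha j hj]
  have hwP : w ∈ perp n (perp n (Submodule.span (ZMod 2) {x}) ⊓ PiSub n) := by
    intro g hg
    have hgx : B n g x = 0 := hg.1 x (Submodule.mem_span_singleton_self x)
    rw [B_eq] at hgx ⊢
    rw [← hgx]
    refine Finset.sum_congr rfl fun i _ => ?_
    have h1 : w ⟨2*i.1, by have := i.2; omega⟩ = 0 := by simp [hw, Nat.mul_mod_right]
    have h2 : w ⟨2*i.1+1, by have := i.2; omega⟩ = x ⟨2*i.1+1, by have := i.2; omega⟩ := by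
      simp only [hw]; rw [if_pos (by omega : (2*i.1+1) % 2 = 1)]
    have h3 : g ⟨2*i.1+1, by have := i.2; omega⟩ = 0 :=
      hPi0 g hg.2 _ (by show (2*i.1+1) % 2 = 1; omega)
    rw [h1, h2, h3]
    ring
  have hBwx : B n w x = 1 := by
    rw [B_eq, ← hx, Q]
    refine Finset.sum_congr rfl fun i _ => ?_
    have h1 : w ⟨2*i.1, by have := i.2; omega⟩ = 0 := by simp [hw, Nat.mul_mod_right]
    have h2 : w ⟨2*i.1+1, by have := i.2; omega⟩ = x ⟨2*i.1+1, by have := i.2; omega⟩ := by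
      simp only [hw]; rw [if_pos (by omega : (2*i.1+1) % 2 = 1)]
    rw [h1, h2]
    ring
  have := (hle ⟨hwP, hwS⟩).1 x (Submodule.mem_span_singleton_self x)
  rw [hBwx] at this
  exact one_ne_zero this
end

section
/- (Lemma 2, injectivity.) The map f sending a nonsingular vector x to the pair (P, H) = ((span{x}^⊥ ⊓ Π)^⊥ ⊓ Σ, span{x}^⊥ ⊓ Σ) is injective: if x and x' are nonsingular vectors of V(2n,2) with f(x) = f(x'), then x = x'. -/
/-- The map `f` sending a nonsingular vector `x` to the antiflag
`(P, H) = ((span{x}^⊥ ⊓ Π)^⊥ ⊓ Σ, span{x}^⊥ ⊓ Σ)` of `Σ`. -/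
def antiflagMap (n : ℕ) (x : Fin (2*n) → ZMod 2) :
    Submodule (ZMod 2) (Fin (2*n) → ZMod 2) × Submodule (ZMod 2) (Fin (2*n) → ZMod 2) :=
  (perp n (perp n (Submodule.span (ZMod 2) {x}) ⊓ PiSub n) ⊓ SigmaSub n,
   perp n (Submodule.span (ZMod 2) {x}) ⊓ SigmaSub n)


namespace AntiflagAux

def ev (n : ℕ) (j : Fin n) : Fin (2*n) := ⟨2*j.1, by have := j.2; omega⟩
def od (n : ℕ) (j : Fin n) : Fin (2*n) := ⟨2*j.1+1, by have := j.2; omega⟩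

lemma B_eq' (n : ℕ) (u v : Fin (2*n) → ZMod 2) :
    B n u v = ∑ i : Fin n, (u (ev n i) * v (od n i) + u (od n i) * v (ev n i)) :=
  B_eq n u v

lemma B_symm (n : ℕ) (u v : Fin (2*n) → ZMod 2) : B n u v = B n v u := by
  simp only [B_eq']; exact Finset.sum_congr rfl fun i _ => by ring

lemma B_single_od (n : ℕ) (v : Fin (2*n) → ZMod 2) (j : Fin n) :
    B n v (Pi.single (od n j) 1) = v (ev n j) := by
  rw [B_eq', Finset.sum_eq_single j]
  · rw [Pi.single_apply, Pi.single_apply, if_pos rfl,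
      if_neg (fun hc => by simp only [ev, od, Fin.ext_iff] at hc; omega)]
    ring
  · intro i _ hij
    rw [Pi.single_apply, Pi.single_apply,
      if_neg (fun hc => hij (Fin.ext (by simp only [od, Fin.ext_iff] at hc; omega))),
      if_neg (fun hc => by simp only [ev, od, Fin.ext_iff] at hc; omega)]
    ring
  · intro hc; exact absurd (Finset.mem_univ j) hc

lemma B_single_ev (n : ℕ) (v : Fin (2*n) → ZMod 2) (j : Fin n) :
    B n v (Pi.single (ev n j) 1) = v (od n j) := by
  rw [B_eq', Finset.sum_eq_single j]
  · rw [Pi.single_apply, Pi.single_apply, if_pos rfl,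
      if_neg (fun hc => by simp only [ev, od, Fin.ext_iff] at hc; omega)]
    ring
  · intro i _ hij
    rw [Pi.single_apply, Pi.single_apply,
      if_neg (fun hc => by simp only [ev, od, Fin.ext_iff] at hc; omega),
      if_neg (fun hc => hij (Fin.ext (by simp only [ev, Fin.ext_iff] at hc; omega)))]
    ring
  · intro hc; exact absurd (Finset.mem_univ j) hc

lemma mem_perp_span (n : ℕ) (v x : Fin (2*n) → ZMod 2) :
    v ∈ perp n (Submodule.span (ZMod 2) {x}) ↔ B n v x = 0 := by
  constructor
  · intro h; exact h x (Submodule.mem_span_singleton_self x)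
  · intro h s hs
    obtain ⟨c, rfl⟩ := Submodule.mem_span_singleton.1 hs
    rw [B_symm, B_smul_left, B_symm, h, mul_zero]

lemma single_ev_mem_Pi (n : ℕ) (j : Fin n) :
    Pi.single (ev n j) (1 : ZMod 2) ∈ PiSub n :=
  Submodule.subset_span ⟨ev n j, by simp [ev, Nat.mul_mod_right], rfl⟩

lemma single_od_mem_Sigma (n : ℕ) (j : Fin n) :
    Pi.single (od n j) (1 : ZMod 2) ∈ SigmaSub n :=
  Submodule.subset_span ⟨od n j, by simp [od, Nat.mul_add_mod], rfl⟩

/-- Vectors in `PiSub` vanish at odd indices. -/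
lemma PiSub_odd_zero (n : ℕ) (u : Fin (2*n) → ZMod 2) (hu : u ∈ PiSub n)
    (k : Fin (2*n)) (hk : k.1 % 2 = 1) : u k = 0 := by
  have : PiSub n ≤ (Submodule.pi Set.univ
      (fun i : Fin (2*n) => if i.1 % 2 = 1 then (⊥ : Submodule (ZMod 2) (ZMod 2)) else ⊤)) := by
    rw [PiSub, Submodule.span_le]
    rintro v ⟨j, hj, rfl⟩
    intro i _
    by_cases hi : i.1 % 2 = 1
    · have hne : i ≠ j := fun hc => by rw [hc] at hi; omega
      simp [hi, Pi.single_apply, hne]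
    · simp [hi]
  have := this hu k (Set.mem_univ k)
  simpa [hk] using this

/-- The "odd part" of a vector. -/
def oddPart (n : ℕ) (x : Fin (2*n) → ZMod 2) : Fin (2*n) → ZMod 2 :=
  fun k => if k.1 % 2 = 1 then x k else 0

lemma oddPart_mem_Sigma (n : ℕ) (x : Fin (2*n) → ZMod 2) : oddPart n x ∈ SigmaSub n := by
  have hrep : oddPart n x = ∑ j : Fin (2*n), oddPart n x j • Pi.single j 1 := by
    funext k
    simp [Finset.sum_apply, Pi.single_apply]
  rw [hrep]
  refine Submodule.sum_mem _ fun j _ => ?_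
  by_cases hj : j.1 % 2 = 1
  · exact Submodule.smul_mem _ _ (Submodule.subset_span ⟨j, hj, rfl⟩)
  · simp [oddPart, hj]

lemma B_oddPart (n : ℕ) (x u : Fin (2*n) → ZMod 2)
    (hu : ∀ k : Fin (2*n), k.1 % 2 = 1 → u k = 0) :
    B n (oddPart n x) u = B n x u := by
  simp only [B_eq']
  refine Finset.sum_congr rfl fun i _ => ?_
  have h1 : u (od n i) = 0 := hu _ (by simp [od, Nat.mul_add_mod])
  have h2 : oddPart n x (od n i) = x (od n i) := by simp [oddPart, od, Nat.mul_add_mod]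
  have h3 : oddPart n x (ev n i) = 0 := by simp [oddPart, ev, Nat.mul_mod_right]
  rw [h1, h2, h3]
  ring

lemma oddPart_mem_P (n : ℕ) (x : Fin (2*n) → ZMod 2) :
    oddPart n x ∈ perp n (perp n (Submodule.span (ZMod 2) {x}) ⊓ PiSub n) ⊓ SigmaSub n := by
  refine ⟨fun u hu => ?_, oddPart_mem_Sigma n x⟩
  obtain ⟨hu1, hu2⟩ := hu
  rw [B_oddPart n x u (fun k hk => PiSub_odd_zero n u hu2 k hk), B_symm]
  exact hu1 x (Submodule.mem_span_singleton_self x)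

/-- From `P x = P x'`: vanishing of odd coordinates transfers. -/
lemma odd_transfer (n : ℕ) (x x' : Fin (2*n) → ZMod 2)
    (h : perp n (perp n (Submodule.span (ZMod 2) {x}) ⊓ PiSub n) ⊓ SigmaSub n
       = perp n (perp n (Submodule.span (ZMod 2) {x'}) ⊓ PiSub n) ⊓ SigmaSub n)
    (j : Fin n) (hj : x' (od n j) = 0) : x (od n j) = 0 := by
  have hy : oddPart n x ∈ perp n (perp n (Submodule.span (ZMod 2) {x'}) ⊓ PiSub n) ⊓ SigmaSub n := by
    rw [← h]; exact oddPart_mem_P n x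
  have he : Pi.single (ev n j) (1 : ZMod 2) ∈
      perp n (Submodule.span (ZMod 2) {x'}) ⊓ PiSub n := by
    refine ⟨(mem_perp_span n _ x').2 ?_, single_ev_mem_Pi n j⟩
    rw [B_symm, B_single_ev, hj]
  have h0 := hy.1 _ he
  rw [B_single_ev] at h0
  simpa [oddPart, od, Nat.mul_add_mod] using h0

end AntiflagAux

open AntiflagAux in
/-- Lemma 2 (injectivity): the map `f` sending a nonsingular vector `x` to the antiflag
`(P, H) = ((span{x}^⊥ ⊓ Π)^⊥ ⊓ Σ, span{x}^⊥ ⊓ Σ)` is injective on nonsingular vectors. -/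
theorem antiflagMap_injective (n : ℕ) (hn : 2 ≤ n) (x x' : Fin (2*n) → ZMod 2)
    (hx : Q n x = 1) (hx' : Q n x' = 1) (h : antiflagMap n x = antiflagMap n x') :
    x = x' := by
  rw [antiflagMap, antiflagMap, Prod.mk.injEq] at h
  obtain ⟨h1, h2⟩ := h
  -- even coordinates
  have heven : ∀ j : Fin n, x (ev n j) = x' (ev n j) := by
    intro j
    have key : ∀ z : Fin (2*n) → ZMod 2,
        (Pi.single (od n j) (1:ZMod 2) ∈ perp n (Submodule.span (ZMod 2) {z}) ⊓ SigmaSub n)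
        ↔ z (ev n j) = 0 := by
      intro z
      constructor
      · intro hm
        have := hm.1 z (Submodule.mem_span_singleton_self z)
        rwa [B_symm, B_single_od] at this
      · intro hz
        exact ⟨(mem_perp_span n _ z).2 (by rw [B_symm, B_single_od, hz]),
          single_od_mem_Sigma n j⟩
    have hiff : x (ev n j) = 0 ↔ x' (ev n j) = 0 := by
      rw [← key x, ← key x', h2]
    revert hiff
    generalize x (ev n j) = a
    generalize x' (ev n j) = b
    revert a b; decide
  -- odd coordinates
  have hodd : ∀ j : Fin n, x (od n j) = x' (od n j) := by
    intro j
    have h1' : x' (od n j) = 0 → x (od n j) = 0 := odd_transfer n x x' h1 j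
    have h2' : x (od n j) = 0 → x' (od n j) = 0 := odd_transfer n x' x h1.symm j
    revert h1' h2'
    generalize x (od n j) = a
    generalize x' (od n j) = b
    revert a b; decide
  funext k
  have hk := k.2
  by_cases hpar : k.1 % 2 = 0
  · have := heven ⟨k.1 / 2, by omega⟩
    have hke : k = ev n ⟨k.1 / 2, by omega⟩ := Fin.ext (by simp [ev]; omega)
    rwa [← hke] at this
  · have := hodd ⟨k.1 / 2, by omega⟩
    have hke : k = od n ⟨k.1 / 2, by omega⟩ := Fin.ext (by simp [od]; omega)
    rwa [← hke] at this
end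

section
/- (Main Theorem, case i = 1.) Let x, x' be distinct nonsingular vectors of V(2n,2), and let (P, H) = f(x), (P', H') = f(x'). Then Q(x + x') = 1 (i.e. the line span{x, x'} is disjoint from the quadric, relation C₁) if and only if exactly one of the two containments P ≤ H' and P' ≤ H holds (relation A₁). -/
/-!
Write `σ x` for the projection of `x` onto `Σ` along `Π` (keep the odd coordinates).
Since `B` pairs `Π` and `Σ` perfectly, `span{x}^⊥ ⊓ Π` is the annihilator of `σ x` in `Π`,
and so `P = span{σ x}` as soon as `σ x ≠ 0`, which `Q x = 1` guarantees. Hence `P ≤ H'` iff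
`B (σ x) x' = 0`. Finally `B (σ x) x' + B (σ x') x = B x x' = Q (x + x')` when
`Q x = Q x' = 1`, and a sum in `GF(2)` equals `1` iff exactly one summand vanishes.
-/

open Submodule

theorem mem_span_single_one_iff {ι R : Type*} [DecidableEq ι] [Fintype ι] [Semiring R]
    (p : ι → Prop) (v : ι → R) :
    v ∈ span R {w | ∃ j, p j ∧ w = Pi.single j 1} ↔ ∀ j, ¬ p j → v j = 0 := by
  constructor
  · intro hv j hj
    induction hv using span_induction with
    | mem w hw =>
      obtain ⟨i, hi, rfl⟩ := hw
      exact Pi.single_eq_of_ne (by rintro rfl; exact hj hi) _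
    | zero => rfl
    | add _ _ _ _ hu hw => simp [hu, hw]
    | smul c _ _ hw => simp [hw]
  · intro hv
    rw [← Finset.univ_sum_single v]
    refine sum_mem fun j _ => ?_
    by_cases hj : p j
    · rw [← mul_one (v j), ← smul_eq_mul, Pi.single_smul]
      exact smul_mem _ _ (subset_span ⟨j, hj, rfl⟩)
    · rw [hv j hj, Pi.single_zero]
      exact zero_mem _

theorem ZMod.add_eq_one_iff_xor (s t : ZMod 2) : s + t = 1 ↔ Xor (s = 0) (t = 0) := by
  revert s t
  decide

variable {n : ℕ}

def evenIdx (i : Fin n) : Fin (2*n) := ⟨2*i.1, by have := i.2; omega⟩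

def oddIdx (i : Fin n) : Fin (2*n) := ⟨2*i.1+1, by have := i.2; omega⟩

@[simp] lemma evenIdx_val_mod_two (i : Fin n) : (evenIdx i).1 % 2 = 0 := by
  simp [evenIdx]

@[simp] lemma oddIdx_val_mod_two (i : Fin n) : (oddIdx i).1 % 2 = 1 := by
  simp [oddIdx]

lemma evenIdx_injective : Function.Injective (evenIdx (n := n)) := by
  intro i j h
  have := congrArg Fin.val h
  simp only [evenIdx] at this
  exact Fin.ext (by omega)

lemma oddIdx_ne_evenIdx (i j : Fin n) : oddIdx i ≠ evenIdx j := by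
  intro h
  have := congrArg (fun m : Fin (2*n) => m.1 % 2) h
  simp at this

lemma exists_eq_evenIdx_or_oddIdx (m : Fin (2*n)) : ∃ i, m = evenIdx i ∨ m = oddIdx i :=
  ⟨⟨m.1 / 2, by omega⟩, by rcases Nat.mod_two_eq_zero_or_one m.1 with h | h <;>
    [left; right] <;> exact Fin.ext (by simp only [evenIdx, oddIdx]; omega)⟩

lemma funext_evenIdx_oddIdx {α : Type*} {v w : Fin (2*n) → α}
    (he : ∀ i, v (evenIdx i) = w (evenIdx i)) (ho : ∀ i, v (oddIdx i) = w (oddIdx i)) :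
    v = w := by
  funext m
  obtain ⟨i, rfl | rfl⟩ := exists_eq_evenIdx_or_oddIdx m
  exacts [he i, ho i]

lemma Q_eq_sum (x : Fin (2*n) → ZMod 2) :
    Q n x = ∑ i, x (evenIdx i) * x (oddIdx i) := rfl

lemma B_eq_sum (u v : Fin (2*n) → ZMod 2) :
    B n u v = ∑ i, (u (evenIdx i) * v (oddIdx i) + u (oddIdx i) * v (evenIdx i)) :=
  B_eq n u v

lemma B_comm (u v : Fin (2*n) → ZMod 2) : B n u v = B n v u := by
  simp only [B_eq_sum]
  exact Finset.sum_congr rfl fun i _ => by ring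

lemma B_smul_right (c : ZMod 2) (v w : Fin (2*n) → ZMod 2) :
    B n v (c • w) = c * B n v w := by
  rw [B_comm, B_smul_left, B_comm]

lemma B_eq_Q_add_of_Q_eq_one {x y : Fin (2*n) → ZMod 2} (hx : Q n x = 1) (hy : Q n y = 1) :
    B n x y = Q n (x + y) := by
  rw [B, hx, hy, add_assoc, CharTwo.add_self_eq_zero, add_zero]

lemma B_single_evenIdx (i : Fin n) (y : Fin (2*n) → ZMod 2) :
    B n (Pi.single (evenIdx i) 1) y = y (oddIdx i) := by
  rw [B_eq_sum, Finset.sum_eq_single i]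
  · simp [oddIdx_ne_evenIdx]
  · intro j _ hji
    simp [evenIdx_injective.ne hji, oddIdx_ne_evenIdx]
  · simp

lemma mem_perp_span_singleton {x v : Fin (2*n) → ZMod 2} :
    v ∈ perp n (span (ZMod 2) {x}) ↔ B n v x = 0 := by
  refine ⟨fun h => h x (mem_span_singleton_self x), fun h s hs => ?_⟩
  obtain ⟨c, rfl⟩ := mem_span_singleton.mp hs
  rw [B_smul_right, h, mul_zero]

lemma mem_piSub_iff {v : Fin (2*n) → ZMod 2} : v ∈ PiSub n ↔ ∀ i, v (oddIdx i) = 0 := by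
  rw [PiSub, mem_span_single_one_iff]
  refine ⟨fun h i => h _ (by simp), fun h m hm => ?_⟩
  obtain ⟨i, rfl | rfl⟩ := exists_eq_evenIdx_or_oddIdx m
  exacts [absurd (evenIdx_val_mod_two i) hm, h i]

lemma mem_sigmaSub_iff {v : Fin (2*n) → ZMod 2} :
    v ∈ SigmaSub n ↔ ∀ i, v (evenIdx i) = 0 := by
  rw [SigmaSub, mem_span_single_one_iff]
  refine ⟨fun h i => h _ (by simp), fun h m hm => ?_⟩
  obtain ⟨i, rfl | rfl⟩ := exists_eq_evenIdx_or_oddIdx m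
  exacts [h i, absurd (oddIdx_val_mod_two i) hm]

def oddPart (n : ℕ) (x : Fin (2*n) → ZMod 2) : Fin (2*n) → ZMod 2 :=
  fun j => if j.1 % 2 = 1 then x j else 0

@[simp] lemma oddPart_evenIdx (x : Fin (2*n) → ZMod 2) (i : Fin n) :
    oddPart n x (evenIdx i) = 0 := by
  simp [oddPart]

@[simp] lemma oddPart_oddIdx (x : Fin (2*n) → ZMod 2) (i : Fin n) :
    oddPart n x (oddIdx i) = x (oddIdx i) := by
  simp [oddPart]

lemma oddPart_mem_sigmaSub (x : Fin (2*n) → ZMod 2) : oddPart n x ∈ SigmaSub n :=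
  mem_sigmaSub_iff.mpr (oddPart_evenIdx x)

lemma B_oddPart_of_mem_piSub (x : Fin (2*n) → ZMod 2) {u : Fin (2*n) → ZMod 2}
    (hu : u ∈ PiSub n) : B n (oddPart n x) u = B n x u := by
  simp [B_eq_sum, mem_piSub_iff.mp hu]

lemma B_oddPart_add_B_oddPart (x y : Fin (2*n) → ZMod 2) :
    B n (oddPart n x) y + B n (oddPart n y) x = B n x y := by
  simp only [B_eq_sum, oddPart_evenIdx, oddPart_oddIdx, ← Finset.sum_add_distrib]
  exact Finset.sum_congr rfl fun i _ => by ring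

lemma exists_oddIdx_eq_one_of_Q_eq_one {x : Fin (2*n) → ZMod 2} (hx : Q n x = 1) :
    ∃ k, x (oddIdx k) = 1 := by
  obtain ⟨k, -, hk⟩ := Finset.exists_ne_zero_of_sum_ne_zero (hx ▸ one_ne_zero : Q n x ≠ 0)
  exact ⟨k, (by decide : ∀ a : ZMod 2, a ≠ 0 → a = 1) _ (right_ne_zero_of_mul hk)⟩

/-- The test vectors `e_{2j} + x_{2j+1} e_{2k}` lie in `span{x}^⊥ ⊓ Π` and pin down every odd
coordinate of `v` in terms of the `(2k+1)`-st one. -/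
lemma apply_oddIdx_eq_of_mem_perp {x v : Fin (2*n) → ZMod 2} {k : Fin n}
    (hk : x (oddIdx k) = 1) (hv : v ∈ perp n (perp n (span (ZMod 2) {x}) ⊓ PiSub n))
    (j : Fin n) : v (oddIdx j) = x (oddIdx j) * v (oddIdx k) := by
  set u : Fin (2*n) → ZMod 2 :=
    Pi.single (evenIdx j) 1 + x (oddIdx j) • Pi.single (evenIdx k) 1 with hu
  have hu_pi : u ∈ PiSub n :=
    mem_piSub_iff.mpr fun i => by simp [hu, oddIdx_ne_evenIdx]
  have hu_perp : u ∈ perp n (span (ZMod 2) {x}) := by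
    rw [mem_perp_span_singleton, hu, B_add_left, B_smul_left, B_single_evenIdx,
      B_single_evenIdx, hk, mul_one, CharTwo.add_self_eq_zero]
  have hvu : B n u v = 0 := by
    rw [B_comm]
    exact hv u (mem_inf.mpr ⟨hu_perp, hu_pi⟩)
  rwa [hu, B_add_left, B_smul_left, B_single_evenIdx, B_single_evenIdx,
    CharTwo.add_eq_zero] at hvu

lemma antiflagMap_fst_eq_span_oddPart {x : Fin (2*n) → ZMod 2} (hx : Q n x = 1) :
    (antiflagMap n x).1 = span (ZMod 2) {oddPart n x} := by
  apply le_antisymm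
  · rintro v ⟨hv_perp, hv_sigma⟩
    obtain ⟨k, hk⟩ := exists_oddIdx_eq_one_of_Q_eq_one hx
    refine mem_span_singleton.mpr
      ⟨v (oddIdx k), funext_evenIdx_oddIdx (fun i => ?_) fun i => ?_⟩
    · simp [mem_sigmaSub_iff.mp hv_sigma i]
    · simp [apply_oddIdx_eq_of_mem_perp hk hv_perp i, mul_comm]
  · refine span_singleton_le_iff_mem _ _ |>.mpr ⟨fun u hu => ?_, oddPart_mem_sigmaSub x⟩
    rw [B_oddPart_of_mem_piSub x hu.2, B_comm]
    exact mem_perp_span_singleton.mp hu.1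

lemma antiflagMap_fst_le_snd_iff {x : Fin (2*n) → ZMod 2} (hx : Q n x = 1)
    (y : Fin (2*n) → ZMod 2) :
    (antiflagMap n x).1 ≤ (antiflagMap n y).2 ↔ B n (oddPart n x) y = 0 := by
  rw [antiflagMap_fst_eq_span_oddPart hx, span_singleton_le_iff_mem]
  exact ⟨fun h => mem_perp_span_singleton.mp h.1,
    fun h => ⟨mem_perp_span_singleton.mpr h, oddPart_mem_sigmaSub x⟩⟩

theorem main_case_one_general (n : ℕ) (x x' : Fin (2*n) → ZMod 2)
    (hx : Q n x = 1) (hx' : Q n x' = 1) :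
    Q n (x + x') = 1 ↔
      Xor' ((antiflagMap n x).1 ≤ (antiflagMap n x').2)
        ((antiflagMap n x').1 ≤ (antiflagMap n x).2) := by
  rw [antiflagMap_fst_le_snd_iff hx, antiflagMap_fst_le_snd_iff hx',
    ← B_eq_Q_add_of_Q_eq_one hx hx', ← B_oddPart_add_B_oddPart]
  exact ZMod.add_eq_one_iff_xor _ _

/-- Main Theorem, case `i = 1`: for distinct nonsingular vectors `x, x'` with
`f x = (P, H)` and `f x' = (P', H')`, the line `span{x, x'}` is disjoint from the
quadric (i.e. `Q (x + x') = 1`, relation `C₁`) if and only if exactly one of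
`P ≤ H'` and `P' ≤ H` holds (relation `A₁`). -/
theorem main_case_one (n : ℕ) (hn : 2 ≤ n) (x x' : Fin (2*n) → ZMod 2)
    (hxx' : x ≠ x') (hx : Q n x = 1) (hx' : Q n x' = 1) :
    Q n (x + x') = 1 ↔
      Xor' ((antiflagMap n x).1 ≤ (antiflagMap n x').2)
        ((antiflagMap n x').1 ≤ (antiflagMap n x).2) :=
  main_case_one_general n x x' hx hx'
end
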